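/- (Cyclic permutation changes the transfer function by a z-shift.) Let (A,[B₁ B₂],[C₁;C₂],D) be a realization with D₁₂ = 0, and let Ĥᵢⱼ(z) = Cᵢ(zI−A)⁻¹Bⱼ + Dᵢⱼ. Then the realization with state matrices Ã = [[A,B₁],[0,0]], B̃ = [[0,B₂],[I,0]], C̃ = [[C₁A, C₁B₁],[C₂, D₂₁]], D̃ = [[D₁₁, C₁B₂],[0, D₂₂]] has transfer function [[Ĥ₁₁(z), zĤ₁₂(z)],[Ĥ₂₁(z)/z, Ĥ₂₂(z)]] at every z ≠ 0 with zI − A invertible. -/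

import Mathlib

/-!
The augmented state matrix `[[A, B₁], [0, 0]]` is block upper triangular, so its resolvent at
`z` is explicit, and its `(2,2)` block `z⁻¹ • 1` produces the factor `z⁻¹` in the `(2,1)` entry.
The first row follows from the resolvent identity `A (zI - A)⁻¹ = z (zI - A)⁻¹ - 1`, which absorbs
the extra factor `A` in `C₁ A`; in the `(1,2)` entry the `-C₁ B₂` it leaves cancels the
feedthrough `C₁ B₂`.
-/

open Matrix

section

variable {K ι κ κ₂ π π₁ π₂ : Type*} [Field K] [DecidableEq ι]

theorem smul_one_sub_fromBlocks_zero_zero [DecidableEq κ] (z : K) (A : Matrix ι ι K)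
    (B : Matrix ι κ K) :
    z • (1 : Matrix (ι ⊕ κ) (ι ⊕ κ) K) - fromBlocks A B 0 0 =
      fromBlocks (z • 1 - A) (-B) 0 (z • 1) := by
  rw [← fromBlocks_one, fromBlocks_smul, sub_eq_add_neg, fromBlocks_neg, fromBlocks_add]
  simp [sub_eq_add_neg]

variable [Fintype ι]

theorem mul_inv_smul_one_sub {z : K} {A : Matrix ι ι K} (hA : IsUnit (z • 1 - A).det) :
    A * (z • 1 - A)⁻¹ = z • (z • 1 - A)⁻¹ - 1 := by
  calc A * (z • 1 - A)⁻¹ = (z • 1 - (z • 1 - A)) * (z • 1 - A)⁻¹ := by rw [sub_sub_cancel]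
    _ = z • (z • 1 - A)⁻¹ - 1 := by rw [sub_mul, smul_one_mul, mul_nonsing_inv _ hA]

theorem mul_mul_inv_smul_one_sub_mul {z : K} {A : Matrix ι ι K} (hA : IsUnit (z • 1 - A).det)
    (C : Matrix π ι K) (B : Matrix ι κ K) :
    C * A * (z • 1 - A)⁻¹ * B = z • (C * (z • 1 - A)⁻¹ * B) - C * B := by
  rw [Matrix.mul_assoc C, mul_inv_smul_one_sub hA, Matrix.mul_sub, Matrix.sub_mul,
    Matrix.mul_smul, Matrix.smul_mul, Matrix.mul_one]

theorem inv_smul_one_sub_fromBlocks_zero_zero [Fintype κ] [DecidableEq κ] {z : K} (hz : z ≠ 0)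
    {A : Matrix ι ι K} (hA : IsUnit (z • 1 - A).det) (B : Matrix ι κ K) :
    (z • (1 : Matrix (ι ⊕ κ) (ι ⊕ κ) K) - fromBlocks A B 0 0)⁻¹ =
      fromBlocks (z • 1 - A)⁻¹ (z⁻¹ • ((z • 1 - A)⁻¹ * B)) 0 (z⁻¹ • 1) := by
  have hz_inv : (z • 1 : Matrix κ κ K)⁻¹ = z⁻¹ • 1 :=
    inv_eq_left_inv (by rw [smul_mul_smul_comm, inv_mul_cancel₀ hz, one_mul, one_smul])
  have hz_unit : IsUnit (z • 1 : Matrix κ κ K) := isUnit_one.smul (Units.mk0 z hz)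
  rw [smul_one_sub_fromBlocks_zero_zero, inv_fromBlocks_zero₂₁_of_isUnit_iff _ _ _
    (iff_of_true ((isUnit_iff_isUnit_det _).2 hA) hz_unit), hz_inv, Matrix.mul_neg,
    Matrix.neg_mul, neg_neg, Matrix.mul_smul, Matrix.mul_one]

noncomputable def transferFunction (A : Matrix ι ι K) (B : Matrix ι κ K) (C : Matrix π ι K)
    (D : Matrix π κ K) (z : K) : Matrix π κ K :=
  C * (z • 1 - A)⁻¹ * B + D

theorem transferFunction_cyclicPermutation [Fintype κ] [DecidableEq κ] [Fintype κ₂] {z : K}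
    (hz : z ≠ 0) {A : Matrix ι ι K} (hA : IsUnit (z • 1 - A).det) (B₁ : Matrix ι κ K)
    (B₂ : Matrix ι κ₂ K) (C₁ : Matrix π₁ ι K) (C₂ : Matrix π₂ ι K) (D₁₁ : Matrix π₁ κ K)
    (D₂₁ : Matrix π₂ κ K) (D₂₂ : Matrix π₂ κ₂ K) :
    transferFunction (fromBlocks A B₁ 0 0) (fromBlocks 0 B₂ 1 0)
        (fromBlocks (C₁ * A) (C₁ * B₁) C₂ D₂₁) (fromBlocks D₁₁ (C₁ * B₂) 0 D₂₂) z =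
      fromBlocks (transferFunction A B₁ C₁ D₁₁ z) (z • transferFunction A B₂ C₁ 0 z)
        (z⁻¹ • transferFunction A B₁ C₂ D₂₁ z) (transferFunction A B₂ C₂ D₂₂ z) := by
  unfold transferFunction
  rw [inv_smul_one_sub_fromBlocks_zero_zero hz hA, fromBlocks_multiply, fromBlocks_multiply,
    fromBlocks_add]
  simp only [Matrix.mul_zero, Matrix.mul_one, zero_add, add_zero, Matrix.mul_smul]
  congr 1
  · rw [← smul_add, ← Matrix.mul_assoc, mul_mul_inv_smul_one_sub_mul hA, sub_add_cancel,
      smul_smul, inv_mul_cancel₀ hz, one_smul]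
  · rw [mul_mul_inv_smul_one_sub_mul hA, sub_add_cancel]
  · rw [← smul_add, Matrix.mul_assoc]

end

theorem cyclic_permutation_transfer_function_shift
    {K : Type*} [Field K] {n m₁ m₂ p₁ p₂ : ℕ}
    (A : Matrix (Fin n) (Fin n) K)
    (B₁ : Matrix (Fin n) (Fin m₁) K) (B₂ : Matrix (Fin n) (Fin m₂) K)
    (C₁ : Matrix (Fin p₁) (Fin n) K) (C₂ : Matrix (Fin p₂) (Fin n) K)
    (D₁₁ : Matrix (Fin p₁) (Fin m₁) K) (D₁₂ : Matrix (Fin p₁) (Fin m₂) K)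
    (D₂₁ : Matrix (Fin p₂) (Fin m₁) K) (D₂₂ : Matrix (Fin p₂) (Fin m₂) K)
    (hD12 : D₁₂ = 0)
    (z : K) (hz : z ≠ 0)
    (hA : IsUnit (z • (1 : Matrix (Fin n) (Fin n) K) - A).det) :
    (Matrix.fromBlocks (C₁ * A) (C₁ * B₁) C₂ D₂₁)
        * (z • (1 : Matrix (Fin n ⊕ Fin m₁) (Fin n ⊕ Fin m₁) K)
            - Matrix.fromBlocks A B₁ 0 0)⁻¹
        * (Matrix.fromBlocks 0 B₂ 1 0)
      + Matrix.fromBlocks D₁₁ (C₁ * B₂) 0 D₂₂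
      = Matrix.fromBlocks
          (C₁ * (z • (1 : Matrix (Fin n) (Fin n) K) - A)⁻¹ * B₁ + D₁₁)
          (z • (C₁ * (z • (1 : Matrix (Fin n) (Fin n) K) - A)⁻¹ * B₂ + D₁₂))
          (z⁻¹ • (C₂ * (z • (1 : Matrix (Fin n) (Fin n) K) - A)⁻¹ * B₁ + D₂₁))
          (C₂ * (z • (1 : Matrix (Fin n) (Fin n) K) - A)⁻¹ * B₂ + D₂₂) := by
  subst hD12
  exact transferFunction_cyclicPermutation hz hA B₁ B₂ C₁ C₂ D₁₁ D₂₁ D₂₂
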